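/- arXiv:1109.3920 — 2 statements merged into one kernel-verified Lean document; each statement's English description precedes it below -/
import Mathlib

section
/- Let D be a bounded domain in ℂ and let p ∈ ℂ \ D be a point such that D̃ := D ∪ {p} is open (i.e. {p} is an isolated connected component of the complement of D). Then for every z ∈ D one has s_D(z) ≤ tanh(K_{D̃}(z, p)/2), where K_{D̃} is the Kobayashi distance on the domain D̃. In particular s_D(z) → 0 as z → p. -/
open Metric

/-- The squeezing function of a bounded planar domain `D ⊆ ℂ` at a point `p ∈ D`:
the supremum of all `r > 0` such that some injective holomorphic map `f : D → Δ`
with `f p = 0` satisfies `Δ_r ⊆ f '' D`. -/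
noncomputable def squeezingFn (D : Set ℂ) (p : ℂ) : ℝ :=
  sSup { r : ℝ | ∃ f : ℂ → ℂ,
    DifferentiableOn ℂ f D ∧ Set.InjOn f D ∧ f '' D ⊆ ball (0 : ℂ) 1 ∧ f p = 0 ∧
    0 < r ∧ ball (0 : ℂ) r ⊆ f '' D }

noncomputable def artanh (x : ℝ) : ℝ := Real.log ((1 + x) / (1 - x)) / 2

noncomputable def poincareDist (a b : ℂ) : ℝ :=
  2 * artanh ‖(a - b) / (1 - (starRingEnd ℂ) a * b)‖

noncomputable def kobayashiDist {E : Type*} [NormedAddCommGroup E] [NormedSpace ℂ E]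
    (D : Set E) (x y : E) : ℝ :=
  sInf { t : ℝ | ∃ (k : ℕ) (φ : Fin (k + 1) → ℂ → E) (a b : Fin (k + 1) → ℂ),
    (∀ i, DifferentiableOn ℂ (φ i) (Metric.ball (0 : ℂ) 1) ∧
      (φ i) '' (Metric.ball (0 : ℂ) 1) ⊆ D ∧
      a i ∈ Metric.ball (0 : ℂ) 1 ∧ b i ∈ Metric.ball (0 : ℂ) 1) ∧
    φ 0 (a 0) = x ∧ φ (Fin.last k) (b (Fin.last k)) = y ∧
    (∀ i : Fin k, φ i.castSucc (b i.castSucc) = φ i.succ (a i.succ)) ∧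
    t = ∑ i, poincareDist (a i) (b i) }

/-!
An injective holomorphic `f : D → Δ` with `f z = 0` and `Δ_r ⊆ f(D)` is bounded near the isolated
boundary point `p`, so it extends holomorphically to `F` on `D̃ = D ∪ {p}`. The local open mapping
theorem shows that `F` is still injective and still maps into `Δ`; hence `F p ∉ f(D)`, which
forces `r ≤ |F p|`. By Schwarz–Pick and the triangle inequality for the Poincaré distance, `F`
shortens every chain of holomorphic discs, so `2 artanh |F p| = ρ(F z, F p) ≤ K_{D̃}(z, p)`.
A single disc centred at `p` gives `K_{D̃}(z, p) ≤ 2 artanh (|z - p| / ε)`, whence `s_D(z) → 0`.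
-/

open Complex ComplexConjugate Filter Set Topology

lemma artanh_eq_real_artanh {x : ℝ} (hx : x ∈ Icc (-1) 1) : artanh x = Real.artanh x := by
  rw [Real.artanh_eq_half_log hx, artanh]
  ring

lemma artanh_nonneg {x : ℝ} (hx₀ : 0 ≤ x) (hx₁ : x ≤ 1) : 0 ≤ artanh x := by
  rw [artanh_eq_real_artanh ⟨by linarith, hx₁⟩]
  exact Real.artanh_nonneg hx₀

lemma artanh_le_artanh {x y : ℝ} (hx : -1 < x) (hy : y < 1) (hxy : x ≤ y) :
    artanh x ≤ artanh y := by
  rw [artanh_eq_real_artanh ⟨hx.le, by linarith⟩, artanh_eq_real_artanh ⟨by linarith, hy.le⟩]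
  exact Real.artanh_le_artanh hx hy hxy

lemma artanh_add {x y : ℝ} (hx : x ∈ Ioo (-1) 1) (hy : y ∈ Ioo (-1) 1) :
    artanh ((x + y) / (1 + x * y)) = artanh x + artanh y := by
  obtain ⟨hx₀, hx₁⟩ := hx
  obtain ⟨hy₀, hy₁⟩ := hy
  have hd : 0 < 1 + x * y := by nlinarith
  have hplus : 1 + (x + y) / (1 + x * y) = (1 + x) * (1 + y) / (1 + x * y) := by
    field_simp; ring
  have hminus : 1 - (x + y) / (1 + x * y) = (1 - x) * (1 - y) / (1 + x * y) := by
    field_simp; ring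
  have hx' : 0 < (1 + x) / (1 - x) := div_pos (by linarith) (by linarith)
  have hy' : 0 < (1 + y) / (1 - y) := div_pos (by linarith) (by linarith)
  rw [artanh, artanh, artanh, hplus, hminus, div_div_div_cancel_right₀ hd.ne', mul_div_mul_comm,
    Real.log_mul hx'.ne' hy'.ne']
  ring

lemma Real.tanh_monotone : Monotone Real.tanh := by
  intro x y hxy
  by_contra! h
  have hmem : ∀ s, Real.tanh s ∈ Ioo (-1) 1 := fun s => Real.tanh_bijOn.mapsTo trivial
  have := Real.strictMonoOn_artanh (hmem y) (hmem x) h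
  rw [Real.artanh_tanh, Real.artanh_tanh] at this
  exact this.not_ge hxy

lemma le_tanh_of_artanh_le {q s : ℝ} (hq : q ∈ Ioo (-1) 1) (h : artanh q ≤ s) :
    q ≤ Real.tanh s := by
  rw [artanh_eq_real_artanh (Ioo_subset_Icc_self hq)] at h
  simpa [Real.tanh_artanh hq] using Real.tanh_monotone h

lemma tanh_le_of_le_artanh {q s : ℝ} (hq : q ∈ Ioo (-1) 1) (h : s ≤ artanh q) :
    Real.tanh s ≤ q := by
  rw [artanh_eq_real_artanh (Ioo_subset_Icc_self hq)] at h
  simpa [Real.tanh_artanh hq] using Real.tanh_monotone h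

noncomputable def mobius (c w : ℂ) : ℂ := (w - c) / (1 - conj c * w)

lemma normSq_one_sub_conj_mul (c w : ℂ) :
    normSq (1 - conj c * w) = normSq (w - c) + (1 - normSq c) * (1 - normSq w) := by
  simp only [normSq_apply, sub_re, sub_im, mul_re, mul_im, one_re, one_im, conj_re, conj_im]
  ring

lemma one_sub_conj_mul_ne_zero {c w : ℂ} (hc : ‖c‖ < 1) (hw : ‖w‖ < 1) :
    1 - conj c * w ≠ 0 := by
  refine sub_ne_zero.2 fun h => ?_
  have : ‖conj c * w‖ < 1 := by
    rw [norm_mul, RCLike.norm_conj]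
    nlinarith [norm_nonneg c, norm_nonneg w]
  simp [← h] at this

lemma norm_mobius_lt_one {c w : ℂ} (hc : ‖c‖ < 1) (hw : ‖w‖ < 1) : ‖mobius c w‖ < 1 := by
  rw [mobius, norm_div, div_lt_one (norm_pos_iff.2 (one_sub_conj_mul_ne_zero hc hw))]
  have hc' : normSq c < 1 := by rw [← Complex.sq_norm]; nlinarith [norm_nonneg c]
  have hw' : normSq w < 1 := by rw [← Complex.sq_norm]; nlinarith [norm_nonneg w]
  have : ‖w - c‖ ^ 2 < ‖1 - conj c * w‖ ^ 2 := by
    rw [Complex.sq_norm, Complex.sq_norm, normSq_one_sub_conj_mul]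
    nlinarith
  exact lt_of_pow_lt_pow_left₀ 2 (norm_nonneg _) this

lemma norm_mobius_comm (a b : ℂ) : ‖mobius a b‖ = ‖mobius b a‖ := by
  have : ‖1 - conj a * b‖ = ‖1 - conj b * a‖ := by
    rw [← RCLike.norm_conj]
    simp [mul_comm]
  rw [mobius, mobius, norm_div, norm_div, norm_sub_rev, this]

@[simp] lemma mobius_self (c : ℂ) : mobius c c = 0 := by simp [mobius]

@[simp] lemma mobius_zero_right (c : ℂ) : mobius c 0 = -c := by simp [mobius]

lemma mobius_neg_mobius {c w : ℂ} (hc : ‖c‖ < 1) (hw : ‖w‖ < 1) :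
    mobius (-c) (mobius c w) = w := by
  have hc' : ‖-c‖ < 1 := by rwa [norm_neg]
  rw [mobius, div_eq_iff (one_sub_conj_mul_ne_zero hc' (norm_mobius_lt_one hc hw)), mobius,
    map_neg]
  have hd : 1 - w * conj c ≠ 0 := by rw [mul_comm]; exact one_sub_conj_mul_ne_zero hc hw
  field_simp
  ring

lemma differentiableOn_mobius {c : ℂ} (hc : ‖c‖ < 1) :
    DifferentiableOn ℂ (mobius c) (ball 0 1) :=
  (differentiableOn_id.sub_const c).div (by fun_prop)
    fun _ hw => one_sub_conj_mul_ne_zero hc (mem_ball_zero_iff.1 hw)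

lemma mapsTo_mobius {c : ℂ} (hc : ‖c‖ < 1) : MapsTo (mobius c) (ball 0 1) (ball 0 1) :=
  fun _ hw => mem_ball_zero_iff.2 (norm_mobius_lt_one hc (mem_ball_zero_iff.1 hw))

lemma poincareDist_eq (a b : ℂ) : poincareDist a b = 2 * artanh ‖mobius a b‖ := by
  rw [poincareDist, mobius, norm_div, norm_div, norm_sub_rev]

lemma poincareDist_zero_left (w : ℂ) : poincareDist 0 w = 2 * artanh ‖w‖ := by
  simp [poincareDist]

lemma poincareDist_zero_right (w : ℂ) : poincareDist w 0 = 2 * artanh ‖w‖ := by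
  simp [poincareDist]

lemma poincareDist_nonneg {a b : ℂ} (ha : ‖a‖ < 1) (hb : ‖b‖ < 1) : 0 ≤ poincareDist a b := by
  rw [poincareDist_eq]
  have := artanh_nonneg (norm_nonneg _) (norm_mobius_lt_one ha hb).le
  positivity

theorem norm_mobius_apply_le {g : ℂ → ℂ} (hg : DifferentiableOn ℂ g (ball 0 1))
    (hmaps : MapsTo g (ball 0 1) (ball 0 1)) {a b : ℂ} (ha : ‖a‖ < 1) (hb : ‖b‖ < 1) :
    ‖mobius (g a) (g b)‖ ≤ ‖mobius a b‖ := by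
  have hga : ‖g a‖ < 1 := mem_ball_zero_iff.1 (hmaps (mem_ball_zero_iff.2 ha))
  have ha' : ‖-a‖ < 1 := by rwa [norm_neg]
  -- `h` is a self-map of the disc fixing `0`, so the Schwarz lemma applies to it.
  set h := mobius (g a) ∘ g ∘ mobius (-a)
  have hdiff : DifferentiableOn ℂ h (ball 0 1) :=
    (differentiableOn_mobius hga).comp (hg.comp (differentiableOn_mobius ha') (mapsTo_mobius ha'))
      (hmaps.comp (mapsTo_mobius ha'))
  have hmaps' : MapsTo h (ball 0 1) (closedBall 0 1) :=
    ((mapsTo_mobius hga).comp (hmaps.comp (mapsTo_mobius ha'))).mono_right ball_subset_closedBall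
  have h0 : h 0 = 0 := by simp [h]
  have hab : h (mobius a b) = mobius (g a) (g b) := by
    simp only [h, Function.comp_apply, mobius_neg_mobius ha hb]
  simpa [hab] using norm_le_norm_of_mapsTo_ball hdiff hmaps' h0 (norm_mobius_lt_one ha hb)

theorem poincareDist_apply_le {g : ℂ → ℂ} (hg : DifferentiableOn ℂ g (ball 0 1))
    (hmaps : MapsTo g (ball 0 1) (ball 0 1)) {a b : ℂ} (ha : ‖a‖ < 1) (hb : ‖b‖ < 1) :
    poincareDist (g a) (g b) ≤ poincareDist a b := by
  rw [poincareDist_eq, poincareDist_eq]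
  have := artanh_le_artanh (by linarith [norm_nonneg (mobius (g a) (g b))])
    (norm_mobius_lt_one ha hb) (norm_mobius_apply_le hg hmaps ha hb)
  linarith

lemma norm_mobius_le {u w : ℂ} (hu : ‖u‖ < 1) (hw : ‖w‖ < 1) :
    ‖mobius u w‖ ≤ (‖u‖ + ‖w‖) / (1 + ‖u‖ * ‖w‖) := by
  have hA := norm_nonneg u
  have hB := norm_nonneg w
  have hN := norm_pos_iff.2 (one_sub_conj_mul_ne_zero hu hw)
  have hQ : ‖w - u‖ ≤ ‖u‖ + ‖w‖ := by simpa [add_comm] using norm_sub_le w u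
  -- With `A = ‖u‖`, `B = ‖w‖`, the defect term of `hid` is `(1 + AB)² - (A + B)²`, so `hsq`
  -- reduces to `‖w - u‖ ≤ A + B`.
  have hid : ‖1 - conj u * w‖ ^ 2 = ‖w - u‖ ^ 2 + (1 - ‖u‖ ^ 2) * (1 - ‖w‖ ^ 2) := by
    simp only [Complex.sq_norm, normSq_one_sub_conj_mul]
  have hsq : ‖w - u‖ ^ 2 * (1 + ‖u‖ * ‖w‖) ^ 2 ≤ (‖u‖ + ‖w‖) ^ 2 * ‖1 - conj u * w‖ ^ 2 := by
    have h1 : ‖w - u‖ ^ 2 ≤ (‖u‖ + ‖w‖) ^ 2 := pow_le_pow_left₀ (norm_nonneg _) hQ 2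
    have h2 : 0 ≤ (1 - ‖u‖ ^ 2) * (1 - ‖w‖ ^ 2) := mul_nonneg (by nlinarith) (by nlinarith)
    rw [hid]
    nlinarith [mul_le_mul_of_nonneg_right h1 h2]
  rw [mobius, norm_div, div_le_div_iff₀ hN (by positivity)]
  rw [← mul_pow, ← mul_pow] at hsq
  exact (pow_le_pow_iff_left₀ (by positivity) (by positivity) two_ne_zero).1 hsq

theorem poincareDist_triangle {u v w : ℂ} (hu : ‖u‖ < 1) (hv : ‖v‖ < 1) (hw : ‖w‖ < 1) :
    poincareDist u w ≤ poincareDist u v + poincareDist v w := by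
  have hv' : ‖-v‖ < 1 := by rwa [norm_neg]
  set A := ‖mobius v u‖
  set B := ‖mobius v w‖
  have hA : A < 1 := norm_mobius_lt_one hv hu
  have hB : B < 1 := norm_mobius_lt_one hv hw
  have hA₀ : 0 ≤ A := norm_nonneg _
  have hB₀ : 0 ≤ B := norm_nonneg _
  have hmove : ‖mobius u w‖ ≤ ‖mobius (mobius v u) (mobius v w)‖ := by
    simpa [mobius_neg_mobius hv hu, mobius_neg_mobius hv hw] using
      norm_mobius_apply_le (differentiableOn_mobius hv') (mapsTo_mobius hv') hA hB
  have hsum : (A + B) / (1 + A * B) < 1 := by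
    rw [div_lt_one (by positivity)]
    nlinarith
  have hle := artanh_le_artanh (by linarith [norm_nonneg (mobius u w)]) hsum
    (hmove.trans (norm_mobius_le hA hB))
  rw [artanh_add ⟨by linarith, hA⟩ ⟨by linarith, hB⟩] at hle
  rw [poincareDist_eq, poincareDist_eq, poincareDist_eq, norm_mobius_comm u v]
  linarith

theorem poincareDist_le_sum {k : ℕ} (u v : Fin (k + 1) → ℂ) (hu : ∀ i, ‖u i‖ < 1)
    (hv : ∀ i, ‖v i‖ < 1) (huv : ∀ i : Fin k, v i.castSucc = u i.succ) :
    poincareDist (u 0) (v (Fin.last k)) ≤ ∑ i, poincareDist (u i) (v i) := by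
  induction k with
  | zero => simp [Fin.last]
  | succ k ih =>
    have hinit := ih (fun i => u i.castSucc) (fun i => v i.castSucc) (fun i => hu _)
      (fun i => hv _) (fun i => huv i.castSucc)
    have hlast : v (Fin.last k).castSucc = u (Fin.last (k + 1)) := by
      rw [huv, Fin.succ_last]
    have htri := poincareDist_triangle (hu 0) (hv (Fin.last k).castSucc) (hv (Fin.last (k + 1)))
    rw [Fin.sum_univ_castSucc, ← hlast]
    simp only [Fin.castSucc_zero] at hinit
    linarith

section Kobayashi

variable {E : Type*} [NormedAddCommGroup E] [NormedSpace ℂ E]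

def kobayashiChainLengths (D : Set E) (x y : E) : Set ℝ :=
  { t : ℝ | ∃ (k : ℕ) (φ : Fin (k + 1) → ℂ → E) (a b : Fin (k + 1) → ℂ),
    (∀ i, DifferentiableOn ℂ (φ i) (Metric.ball (0 : ℂ) 1) ∧
      (φ i) '' (Metric.ball (0 : ℂ) 1) ⊆ D ∧
      a i ∈ Metric.ball (0 : ℂ) 1 ∧ b i ∈ Metric.ball (0 : ℂ) 1) ∧
    φ 0 (a 0) = x ∧ φ (Fin.last k) (b (Fin.last k)) = y ∧
    (∀ i : Fin k, φ i.castSucc (b i.castSucc) = φ i.succ (a i.succ)) ∧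
    t = ∑ i, poincareDist (a i) (b i) }

lemma kobayashiDist_eq_sInf (D : Set E) (x y : E) :
    kobayashiDist D x y = sInf (kobayashiChainLengths D x y) := rfl

variable {D : Set E} {x y : E} {t : ℝ}

lemma nonneg_of_mem_kobayashiChainLengths (ht : t ∈ kobayashiChainLengths D x y) : 0 ≤ t := by
  obtain ⟨k, φ, a, b, hφ, -, -, -, rfl⟩ := ht
  exact Finset.sum_nonneg fun i _ =>
    poincareDist_nonneg (mem_ball_zero_iff.1 (hφ i).2.2.1) (mem_ball_zero_iff.1 (hφ i).2.2.2)

lemma kobayashiDist_nonneg (D : Set E) (x y : E) : 0 ≤ kobayashiDist D x y := by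
  rw [kobayashiDist_eq_sInf]
  exact Real.sInf_nonneg fun _ => nonneg_of_mem_kobayashiChainLengths

lemma kobayashiDist_le_of_mem (ht : t ∈ kobayashiChainLengths D x y) :
    kobayashiDist D x y ≤ t := by
  rw [kobayashiDist_eq_sInf]
  exact csInf_le ⟨0, fun _ => nonneg_of_mem_kobayashiChainLengths⟩ ht

lemma poincareDist_mem_kobayashiChainLengths {φ : ℂ → E} (hφ : DifferentiableOn ℂ φ (ball 0 1))
    (hφD : φ '' ball 0 1 ⊆ D) {a b : ℂ} (ha : a ∈ ball (0 : ℂ) 1) (hb : b ∈ ball (0 : ℂ) 1) :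
    poincareDist a b ∈ kobayashiChainLengths D (φ a) (φ b) :=
  ⟨0, fun _ => φ, fun _ => a, fun _ => b, fun _ => ⟨hφ, hφD, ha, hb⟩, rfl, rfl,
    fun i => i.elim0, by simp⟩

lemma add_poincareDist_mem_kobayashiChainLengths {φ : ℂ → E}
    (hφ : DifferentiableOn ℂ φ (ball 0 1)) (hφD : φ '' ball 0 1 ⊆ D) {a b : ℂ}
    (ha : a ∈ ball (0 : ℂ) 1) (hb : b ∈ ball (0 : ℂ) 1)
    (ht : t ∈ kobayashiChainLengths D x (φ a)) :
    t + poincareDist a b ∈ kobayashiChainLengths D x (φ b) := by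
  obtain ⟨k, ψ, a', b', hψ, hx, hy, hchain, rfl⟩ := ht
  refine ⟨k + 1, Fin.snoc ψ φ, Fin.snoc a' a, Fin.snoc b' b, fun i => ?_, ?_, by simp,
    fun i => ?_, by simp [Fin.sum_univ_castSucc]⟩
  · induction i using Fin.lastCases with
    | last => simpa only [Fin.snoc_last] using ⟨hφ, hφD, ha, hb⟩
    | cast j => simpa only [Fin.snoc_castSucc] using hψ j
  · simpa only [← Fin.castSucc_zero, Fin.snoc_castSucc] using hx
  · induction i using Fin.lastCases with
    | last => simpa only [Fin.snoc_castSucc, Fin.succ_last, Fin.snoc_last] using hy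
    | cast j => simpa only [Fin.succ_castSucc, Fin.snoc_castSucc] using hchain j

theorem poincareDist_le_of_mem_kobayashiChainLengths {F : E → ℂ} (hF : DifferentiableOn ℂ F D)
    (hFD : MapsTo F D (ball 0 1)) (ht : t ∈ kobayashiChainLengths D x y) :
    poincareDist (F x) (F y) ≤ t := by
  obtain ⟨k, φ, a, b, hφ, rfl, rfl, hchain, rfl⟩ := ht
  have hmaps : ∀ i, MapsTo (F ∘ φ i) (ball 0 1) (ball 0 1) := fun i w hw =>
    hFD ((hφ i).2.1 ⟨w, hw, rfl⟩)
  have hdiff : ∀ i, DifferentiableOn ℂ (F ∘ φ i) (ball 0 1) := fun i =>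
    hF.comp (hφ i).1 fun w hw => (hφ i).2.1 ⟨w, hw, rfl⟩
  have ha : ∀ i, ‖a i‖ < 1 := fun i => mem_ball_zero_iff.1 (hφ i).2.2.1
  have hb : ∀ i, ‖b i‖ < 1 := fun i => mem_ball_zero_iff.1 (hφ i).2.2.2
  calc poincareDist (F (φ 0 (a 0))) (F (φ (Fin.last k) (b (Fin.last k))))
      ≤ ∑ i, poincareDist (F (φ i (a i))) (F (φ i (b i))) :=
        poincareDist_le_sum (fun i => F (φ i (a i))) (fun i => F (φ i (b i)))
          (fun i => mem_ball_zero_iff.1 (hmaps i (mem_ball_zero_iff.2 (ha i))))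
          (fun i => mem_ball_zero_iff.1 (hmaps i (mem_ball_zero_iff.2 (hb i))))
          (fun i => by simp only [hchain i])
    _ ≤ ∑ i, poincareDist (a i) (b i) :=
        Finset.sum_le_sum fun i _ => poincareDist_apply_le (hdiff i) (hmaps i) (ha i) (hb i)

end Kobayashi

section AffineDisc

variable {T : Set ℂ} {c x y : ℂ} {ε t : ℝ}

lemma image_affine_ball_subset (hε : 0 < ε) (hball : ball c ε ⊆ T) :
    (fun w : ℂ => c + ε * w) '' ball 0 1 ⊆ T := by
  rintro _ ⟨w, hw, rfl⟩
  apply hball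
  rw [mem_ball_zero_iff] at hw
  rw [mem_ball, dist_eq, add_sub_cancel_left, norm_mul, norm_real, Real.norm_of_nonneg hε.le]
  nlinarith [norm_nonneg w]

lemma div_mem_ball_of_mem_ball (hx : x ∈ ball c ε) : (x - c) / ε ∈ ball (0 : ℂ) 1 := by
  have hε := pos_of_mem_ball hx
  rw [mem_ball, dist_eq] at hx
  rwa [mem_ball_zero_iff, norm_div, norm_real, Real.norm_of_nonneg hε.le, div_lt_one hε]

lemma affine_div_of_mem_ball (hx : x ∈ ball c ε) : c + ε * ((x - c) / ε) = x := by
  have : (ε : ℂ) ≠ 0 := ofReal_ne_zero.2 (pos_of_mem_ball hx).ne'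
  field_simp
  ring

lemma poincareDist_mem_kobayashiChainLengths_of_ball (hball : ball c ε ⊆ T)
    (hx : x ∈ ball c ε) (hy : y ∈ ball c ε) :
    poincareDist ((x - c) / ε) ((y - c) / ε) ∈ kobayashiChainLengths T x y := by
  simpa only [affine_div_of_mem_ball hx, affine_div_of_mem_ball hy] using
    poincareDist_mem_kobayashiChainLengths (by fun_prop)
      (image_affine_ball_subset (pos_of_mem_ball hx) hball)
      (div_mem_ball_of_mem_ball hx) (div_mem_ball_of_mem_ball hy)

lemma add_poincareDist_mem_kobayashiChainLengths_of_ball (hball : ball c ε ⊆ T)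
    (hx : x ∈ ball c ε) (hy : y ∈ ball c ε) {z : ℂ} (ht : t ∈ kobayashiChainLengths T z x) :
    t + poincareDist ((x - c) / ε) ((y - c) / ε) ∈ kobayashiChainLengths T z y := by
  rw [← affine_div_of_mem_ball hx] at ht
  simpa only [affine_div_of_mem_ball hy] using
    add_poincareDist_mem_kobayashiChainLengths (by fun_prop)
      (image_affine_ball_subset (pos_of_mem_ball hx) hball)
      (div_mem_ball_of_mem_ball hx) (div_mem_ball_of_mem_ball hy) ht

end AffineDisc

theorem kobayashiChainLengths_nonempty {T : Set ℂ} (hT : IsOpen T) (hTc : IsPreconnected T)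
    {x y : ℂ} (hx : x ∈ T) (hy : y ∈ T) : (kobayashiChainLengths T x y).Nonempty := by
  obtain ⟨ε, hε, hball⟩ := isOpen_iff.1 hT x hx
  have hxx : (kobayashiChainLengths T x x).Nonempty :=
    ⟨_, poincareDist_mem_kobayashiChainLengths_of_ball hball (mem_ball_self hε)
      (mem_ball_self hε)⟩
  -- Reachability from `x` is open and closed in `T`: a disc centred at `a` joins `a` to nearby
  -- points in both directions.
  refine hTc.induction₂' (fun a b => (kobayashiChainLengths T x a).Nonempty →
    (kobayashiChainLengths T x b).Nonempty) (fun a ha => ?_) (fun _ _ _ _ _ _ hab hbc => hbc ∘ hab)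
    hx hy hxx
  obtain ⟨δ, hδ, hball⟩ := isOpen_iff.1 hT a ha
  filter_upwards [mem_nhdsWithin_of_mem_nhds (ball_mem_nhds a hδ)] with b hb
  exact ⟨fun ⟨_, ht⟩ => ⟨_, add_poincareDist_mem_kobayashiChainLengths_of_ball hball
      (mem_ball_self hδ) hb ht⟩,
    fun ⟨_, ht⟩ => ⟨_, add_poincareDist_mem_kobayashiChainLengths_of_ball hball hb
      (mem_ball_self hδ) ht⟩⟩

theorem nhds_le_map_nhds_of_injOn {g : ℂ → ℂ} {s : Set ℂ} {x : ℂ} (hg : AnalyticAt ℂ g x)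
    (hinj : InjOn g s) (hs : s ∈ 𝓝[≠] x) : 𝓝 (g x) ≤ map g (𝓝 x) := by
  refine hg.eventually_constant_or_nhds_le_map_nhds.resolve_left fun hconst => ?_
  have hfib : ∀ᶠ z in 𝓝[≠] x, z ∈ s ∧ g z = g x := Filter.inter_mem hs (nhdsWithin_le_nhds hconst)
  obtain ⟨z, ⟨hzs, hz⟩, hzx⟩ := (hfib.and self_mem_nhdsWithin).exists
  obtain ⟨w, ⟨hws, hw⟩, hwz⟩ := (hfib.and (mem_nhdsWithin_of_mem_nhds
    (isOpen_compl_singleton.mem_nhds (Ne.symm hzx)))).exists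
  exact hwz (hinj hws hzs (hw.trans hz.symm))

theorem injOn_insert_of_analyticOnNhd {g : ℂ → ℂ} {s : Set ℂ} {c : ℂ}
    (hg : AnalyticOnNhd ℂ g (insert c s)) (hs : IsOpen s) (hcs : c ∉ s) (hc : s ∈ 𝓝[≠] c)
    (hinj : InjOn g s) : InjOn g (insert c s) := by
  refine (injOn_insert hcs).2 ⟨hinj, ?_⟩
  rintro ⟨w, hw, hgw⟩
  -- Disjoint neighbourhoods of `c` and `w` would both be mapped onto neighbourhoods of `g c`,
  -- producing a second common value.
  obtain ⟨U, hU, V, hV, hUV⟩ :=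
    Filter.disjoint_iff.1 (disjoint_nhds_nhds.2 (ne_of_mem_of_not_mem hw hcs).symm)
  have hU' : g '' (U ∩ insert c s) ∈ 𝓝 (g c) :=
    nhds_le_map_nhds_of_injOn (hg c (mem_insert c s)) hinj hc
      (image_mem_map (inter_mem hU (insert_mem_nhds_iff.2 hc)))
  have hV' : g '' (V ∩ s) ∈ 𝓝 (g c) := by
    rw [← hgw]
    exact nhds_le_map_nhds_of_injOn (hg w (mem_insert_of_mem c hw)) hinj
      (mem_nhdsWithin_of_mem_nhds (hs.mem_nhds hw)) (image_mem_map (inter_mem hV (hs.mem_nhds hw)))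
  obtain ⟨_, hne, ⟨ζ, ⟨hζU, hζ⟩, rfl⟩, ⟨η, ⟨hηV, hηs⟩, hη⟩⟩ :=
    Filter.nonempty_of_mem (inter_mem_nhdsWithin {g c}ᶜ (inter_mem hU' hV'))
  have hζs : ζ ∈ s := hζ.resolve_left fun h => hne (h ▸ rfl)
  exact hUV.ne_of_mem hζU hηV (hinj hζs hηs hη.symm)

theorem mem_ball_of_nhds_le_map {g : ℂ → ℂ} {s : Set ℂ} {c a : ℂ} {r : ℝ} (hr : r ≠ 0)
    (hgc : ContinuousAt g c) (hopen : 𝓝 (g c) ≤ map g (𝓝 c)) (hs : s ∈ 𝓝[≠] c)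
    (hmaps : MapsTo g s (ball a r)) : g c ∈ ball a r := by
  have hgc' : g c ∈ closedBall a r :=
    isClosed_closedBall.mem_of_tendsto (hgc.tendsto.mono_left nhdsWithin_le_nhds)
      (mem_of_superset hs fun z hz => ball_subset_closedBall (hmaps hz))
  have hmaps' : MapsTo g (insert c s) (closedBall a r) := by
    rintro z (rfl | hz)
    exacts [hgc', ball_subset_closedBall (hmaps hz)]
  rw [← interior_closedBall a hr]
  exact mem_interior_iff_mem_nhds.2 (hopen (mem_of_superset
    (image_mem_map (insert_mem_nhds_iff.2 hs)) (image_subset_iff.2 hmaps')))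

theorem exists_extension_injOn_mapsTo_ball {D : Set ℂ} {p : ℂ} {f : ℂ → ℂ} (hp : p ∉ D)
    (hopen : IsOpen (insert p D)) (hf : DifferentiableOn ℂ f D) (hinj : InjOn f D)
    (hmaps : MapsTo f D (ball 0 1)) :
    ∃ F : ℂ → ℂ, DifferentiableOn ℂ F (insert p D) ∧ EqOn F f D ∧ InjOn F (insert p D) ∧
      MapsTo F (insert p D) (ball 0 1) := by
  have hD : IsOpen D := by
    simpa [insert_sdiff_self_of_notMem hp] using hopen.sdiff (isClosed_singleton (x := p))
  have hT : insert p D ∈ 𝓝 p := hopen.mem_nhds (mem_insert p D)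
  have hDp : D ∈ 𝓝[≠] p := insert_mem_nhds_iff.1 hT
  set F := Function.update f p (limUnder (𝓝[≠] p) f)
  have hFf : EqOn F f D := fun w hw => Function.update_of_ne (ne_of_mem_of_not_mem hw hp) _ _
  have hF : DifferentiableOn ℂ F (insert p D) := by
    refine differentiableOn_update_limUnder_of_bddAbove hT
      (by rwa [insert_sdiff_self_of_notMem hp]) ⟨1, ?_⟩
    rintro _ ⟨w, hw, rfl⟩
    exact (mem_ball_zero_iff.1 (hmaps (by simpa [hp] using hw))).le
  have hFinj : InjOn F (insert p D) :=
    injOn_insert_of_analyticOnNhd (hF.analyticOnNhd hopen) hD hp hDp (hinj.congr hFf.symm)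
  have hFp : F p ∈ ball 0 1 :=
    mem_ball_of_nhds_le_map one_ne_zero (hF.continuousOn.continuousAt hT)
      (nhds_le_map_nhds_of_injOn (hF.analyticOnNhd hopen p (mem_insert p D)) hFinj
        (mem_nhdsWithin_of_mem_nhds hT))
      hDp fun w hw => hFf hw ▸ hmaps hw
  refine ⟨F, hF, hFf, hFinj, ?_⟩
  rintro w (rfl | hw)
  exacts [hFp, hFf hw ▸ hmaps hw]

theorem le_tanh_half_kobayashiDist {D : Set ℂ} {p z : ℂ} {f : ℂ → ℂ} {r : ℝ}
    (hD : IsPreconnected D) (hp : p ∉ D) (hopen : IsOpen (insert p D)) (hz : z ∈ D)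
    (hf : DifferentiableOn ℂ f D) (hinj : InjOn f D) (hmaps : f '' D ⊆ ball 0 1) (hfz : f z = 0)
    (hr : ball 0 r ⊆ f '' D) : r ≤ Real.tanh (kobayashiDist (insert p D) z p / 2) := by
  obtain ⟨F, hF, hFf, hFinj, hFmaps⟩ :=
    exists_extension_injOn_mapsTo_ball hp hopen hf hinj (mapsTo_iff_image_subset.2 hmaps)
  have hFp : F p ∉ f '' D := by
    rintro ⟨w, hw, hfw⟩
    rw [← hFf hw] at hfw
    exact hp (hFinj (mem_insert_of_mem p hw) (mem_insert p D) hfw ▸ hw)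
  have hrF : r ≤ ‖F p‖ := not_lt.1 fun h => hFp (hr (mem_ball_zero_iff.2 h))
  have hpD : p ∈ closure D := mem_closure_iff_nhdsWithin_neBot.2
    (NeBot.mono inferInstance (nhdsWithin_le_of_mem
      (insert_mem_nhds_iff.1 (hopen.mem_nhds (mem_insert p D)))))
  have hT : IsPreconnected (insert p D) :=
    hD.subset_closure (subset_insert p D) (insert_subset hpD subset_closure)
  have hK : poincareDist (F z) (F p) ≤ kobayashiDist (insert p D) z p := by
    rw [kobayashiDist_eq_sInf]
    exact le_csInf (kobayashiChainLengths_nonempty hopen hT (mem_insert_of_mem p hz) (mem_insert p D))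
      fun _ => poincareDist_le_of_mem_kobayashiChainLengths hF hFmaps
  rw [hFf hz, hfz, poincareDist_zero_left] at hK
  have hF1 : ‖F p‖ < 1 := mem_ball_zero_iff.1 (hFmaps (mem_insert p D))
  exact hrF.trans (le_tanh_of_artanh_le ⟨by linarith [norm_nonneg (F p)], hF1⟩ (by linarith))

theorem kobayashiDist_le_two_mul_artanh {T : Set ℂ} {p z : ℂ} {ε : ℝ} (hball : ball p ε ⊆ T)
    (hz : z ∈ ball p ε) : kobayashiDist T z p ≤ 2 * artanh (dist z p / ε) := by
  have hε := pos_of_mem_ball hz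
  have := kobayashiDist_le_of_mem
    (poincareDist_mem_kobayashiChainLengths_of_ball hball hz (mem_ball_self hε))
  rwa [sub_self, zero_div, poincareDist_zero_right, norm_div, norm_real,
    Real.norm_of_nonneg hε.le, ← dist_eq] at this

theorem stmt_13_general (D : Set ℂ)
    (hDconn : IsConnected D)
    (p : ℂ) (hp : p ∉ D) (hopen : IsOpen (insert p D)) :
    (∀ z ∈ D, squeezingFn D z ≤ Real.tanh (kobayashiDist (insert p D) z p / 2)) ∧
    Filter.Tendsto (squeezingFn D) (nhdsWithin p D) (nhds 0) := by
  have hbound : ∀ z ∈ D, squeezingFn D z ≤ Real.tanh (kobayashiDist (insert p D) z p / 2) :=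
    fun z hz => Real.sSup_le
      (fun _ ⟨_, hf, hinj, hmaps, hfz, _, hr⟩ =>
        le_tanh_half_kobayashiDist hDconn.isPreconnected hp hopen hz hf hinj hmaps hfz hr)
      (by simpa using Real.tanh_monotone (div_nonneg (kobayashiDist_nonneg _ z p) zero_le_two))
  refine ⟨hbound, ?_⟩
  obtain ⟨ε, hε, hball⟩ := isOpen_iff.1 hopen p (mem_insert p D)
  have hnear : ∀ z ∈ D, z ∈ ball p ε → squeezingFn D z ≤ dist z p / ε := by
    intro z hz hzp
    have hd₀ : 0 ≤ dist z p / ε := by positivity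
    exact (hbound z hz).trans (tanh_le_of_le_artanh ⟨by linarith, (div_lt_one hε).2 hzp⟩
      (by linarith [kobayashiDist_le_two_mul_artanh hball hzp]))
  refine squeeze_zero' (g := fun z => dist z p / ε)
    (Eventually.of_forall fun _ => Real.sSup_nonneg fun _ ⟨_, _, _, _, _, hr, _⟩ => hr.le) ?_ ?_
  · filter_upwards [self_mem_nhdsWithin, mem_nhdsWithin_of_mem_nhds (ball_mem_nhds p hε)]
      with z hz hzp using hnear z hz hzp
  · simpa using (((continuous_id.dist (continuous_const (y := p))).tendsto p).div_const ε).mono_left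
      (nhdsWithin_le_nhds (s := D))

/-- Let `D ⊆ ℂ` be a bounded domain and `p ∉ D` a point such that
`D̃ = D ∪ {p}` is open (an isolated point of the complement). Then
`s_D(z) ≤ tanh(K_{D̃}(z,p)/2)` for all `z ∈ D`; in particular `s_D(z) → 0` as `z → p`. -/
theorem stmt_13 (D : Set ℂ)
    (hDopen : IsOpen D) (hDconn : IsConnected D) (hDbd : Bornology.IsBounded D)
    (p : ℂ) (hp : p ∉ D) (hopen : IsOpen (insert p D)) :
    (∀ z ∈ D, squeezingFn D z ≤ Real.tanh (kobayashiDist (insert p D) z p / 2)) ∧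
    Filter.Tendsto (squeezingFn D) (nhdsWithin p D) (nhds 0) :=
  stmt_13_general D hDconn p hp hopen
end

section
/- Let u, v, w be real numbers with 0 < u < v < w < 1, let (r_k)_{k≥1} be a sequence of positive numbers with u < r_k < v for all k, and let (f_k)_{k≥1} be a sequence of holomorphic automorphisms of the unit disc Δ such that the sets f_k(cl Δ_w) (images of the closed disc of radius w) are pairwise disjoint. Then the domain D = Δ \ (⋃_{k=1}^∞ f_k(cl Δ_{r_k})) has squeezing function with a positive lower bound: there exists c > 0 with s_D(z) ≥ c for all z ∈ D (D is a holomorphic homogeneous regular domain, which may be infinitely connected). -/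
/-!
The proof works with the pseudo-hyperbolic distance `ρ(a, b) = |b - a| / |1 - ā b|`, which
holomorphic self-maps of the disc do not increase (Schwarz–Pick), so that automorphisms are
`ρ`-isometries. As the sets `f k (cl Δ_w)` are disjoint, distinct holes `f k (cl Δ_{r k})` are at
`ρ`-distance more than `s = (w - v) / (1 - v w)`. At a point `z` that is `ρ`-far from every hole,
the Möbius map sending `z` to `0` maps `D` onto a set containing a disc of fixed radius. If `z` is
close to the hole `f j (cl Δ_t)`, pass to the coordinate `g = (f j)⁻¹`, in which that hole is
`cl Δ_t`, and apply the inversion `ζ ↦ t / ζ`: it maps `D` into `Δ`, turns the boundary of the hole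
into the unit circle, and sends `z` to a point `q` with `|q| ≥ t + u (1 - v) / 4`. Near `q` the
inversion distorts `ρ` by a bounded factor, so the other holes stay away from `q`, and the Möbius
map sending `q` to `0` finishes the argument.
-/

open Metric

open Set ComplexConjugate

noncomputable def discMobius (a z : ℂ) : ℂ := (z - a) / (1 - conj a * z)

noncomputable def pseudoHypDist (a b : ℂ) : ℝ := ‖discMobius a b‖

section Mobius

variable {a b z : ℂ}

theorem sq_norm_one_sub_conj_mul_sub_sq_norm_sub (a z : ℂ) :
    ‖1 - conj a * z‖ ^ 2 - ‖z - a‖ ^ 2 = (1 - ‖a‖ ^ 2) * (1 - ‖z‖ ^ 2) := by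
  simp only [Complex.sq_norm, Complex.normSq_apply, Complex.sub_re, Complex.sub_im,
    Complex.mul_re, Complex.mul_im, Complex.one_re, Complex.one_im, Complex.conj_re,
    Complex.conj_im]
  ring

theorem one_sub_conj_mul_ne_zero_s14 (ha : ‖a‖ < 1) (hz : ‖z‖ ≤ 1) : 1 - conj a * z ≠ 0 := by
  refine sub_ne_zero.2 fun h => ?_
  have : ‖conj a * z‖ < 1 := by
    rw [norm_mul, Complex.norm_conj]
    exact (mul_le_of_le_one_right (norm_nonneg a) hz).trans_lt ha
  rw [← h, norm_one] at this
  exact lt_irrefl 1 this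

theorem norm_discMobius_lt_one (ha : ‖a‖ < 1) (hz : ‖z‖ < 1) : ‖discMobius a z‖ < 1 := by
  have hd := norm_pos_iff.2 (one_sub_conj_mul_ne_zero_s14 ha hz.le)
  rw [discMobius, norm_div, div_lt_one hd, ← sq_lt_sq₀ (norm_nonneg _) hd.le]
  have : 0 < (1 - ‖a‖ ^ 2) * (1 - ‖z‖ ^ 2) := by
    apply mul_pos <;> nlinarith [norm_nonneg a, norm_nonneg z]
  linarith [sq_norm_one_sub_conj_mul_sub_sq_norm_sub a z]

@[simp]
theorem discMobius_self (a : ℂ) : discMobius a a = 0 := by simp [discMobius]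

theorem discMobius_neg_discMobius (ha : ‖a‖ < 1) (hz : ‖z‖ < 1) :
    discMobius (-a) (discMobius a z) = z := by
  have hd := one_sub_conj_mul_ne_zero_s14 ha hz.le
  have haa := one_sub_conj_mul_ne_zero_s14 ha ha.le
  have hnum : discMobius a z - -a = z * (1 - conj a * a) / (1 - conj a * z) := by
    rw [discMobius, sub_neg_eq_add, div_add' _ _ _ hd]
    ring
  have hden : 1 - conj (-a) * discMobius a z = (1 - conj a * a) / (1 - conj a * z) := by
    rw [discMobius, map_neg, neg_mul, sub_neg_eq_add, mul_div_assoc', add_div' _ _ _ hd]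
    ring
  rw [discMobius, hnum, hden, div_div_div_cancel_right₀ hd, mul_div_cancel_right₀ _ haa]

theorem differentiableAt_discMobius (ha : ‖a‖ < 1) (hz : ‖z‖ ≤ 1) :
    DifferentiableAt ℂ (discMobius a) z :=
  ((differentiableAt_id.sub_const a).div (by fun_prop)) (one_sub_conj_mul_ne_zero_s14 ha hz)

theorem differentiableOn_discMobius (ha : ‖a‖ < 1) :
    DifferentiableOn ℂ (discMobius a) (ball 0 1) := fun _ hz =>
  (differentiableAt_discMobius ha (mem_ball_zero_iff.1 hz).le).differentiableWithinAt

theorem mapsTo_discMobius (ha : ‖a‖ < 1) : MapsTo (discMobius a) (ball 0 1) (ball 0 1) :=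
  fun _ hz => mem_ball_zero_iff.2 (norm_discMobius_lt_one ha (mem_ball_zero_iff.1 hz))

theorem pseudoHypDist_eq_div (a b : ℂ) : pseudoHypDist a b = ‖b - a‖ / ‖1 - conj a * b‖ :=
  norm_div _ _

theorem pseudoHypDist_comm (a b : ℂ) : pseudoHypDist a b = pseudoHypDist b a := by
  rw [pseudoHypDist_eq_div, pseudoHypDist_eq_div, norm_sub_rev,
    ← Complex.norm_conj (1 - conj a * b)]
  simp [mul_comm]

theorem pseudoHypDist_nonneg (a b : ℂ) : 0 ≤ pseudoHypDist a b := norm_nonneg _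

theorem norm_sub_norm_div_le_pseudoHypDist (ha : ‖a‖ < 1) (hb : ‖b‖ < 1) :
    (‖b‖ - ‖a‖) / (1 - ‖a‖ * ‖b‖) ≤ pseudoHypDist a b := by
  have hab : 0 < 1 - ‖a‖ * ‖b‖ := by nlinarith [norm_nonneg a, norm_nonneg b]
  have hd := norm_pos_iff.2 (one_sub_conj_mul_ne_zero_s14 ha hb.le)
  rw [pseudoHypDist_eq_div, div_le_div_iff₀ hab hd]
  refine (mul_le_mul_of_nonneg_right (le_abs_self _) hd.le).trans ?_
  rw [← sq_le_sq₀ (by positivity) (by positivity)]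
  have hP : 0 ≤ (1 - ‖a‖ ^ 2) * (1 - ‖b‖ ^ 2) := by
    apply mul_nonneg <;> nlinarith [norm_nonneg a, norm_nonneg b]
  have hsub : (‖b‖ - ‖a‖) ^ 2 ≤ ‖b - a‖ ^ 2 :=
    sq_le_sq.2 ((abs_norm_sub_norm_le b a).trans_eq (abs_norm _).symm)
  nlinarith [sq_norm_one_sub_conj_mul_sub_sq_norm_sub a b, mul_le_mul_of_nonneg_right hsub hP,
    sq_abs (‖b‖ - ‖a‖)]

theorem pseudoHypDist_le_norm_add_norm_div (ha : ‖a‖ < 1) (hb : ‖b‖ < 1) :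
    pseudoHypDist a b ≤ (‖a‖ + ‖b‖) / (1 + ‖a‖ * ‖b‖) := by
  have hd := norm_pos_iff.2 (one_sub_conj_mul_ne_zero_s14 ha hb.le)
  rw [pseudoHypDist_eq_div, div_le_div_iff₀ hd (by positivity), ← sq_le_sq₀ (by positivity)
    (by positivity)]
  have hP : 0 ≤ (1 - ‖a‖ ^ 2) * (1 - ‖b‖ ^ 2) := by
    apply mul_nonneg <;> nlinarith [norm_nonneg a, norm_nonneg b]
  have hsub : ‖b - a‖ ^ 2 ≤ (‖a‖ + ‖b‖) ^ 2 :=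
    pow_le_pow_left₀ (norm_nonneg _) ((norm_sub_le b a).trans_eq (add_comm _ _)) 2
  nlinarith [sq_norm_one_sub_conj_mul_sub_sq_norm_sub a b, mul_le_mul_of_nonneg_right hsub hP]

theorem norm_mul_le_of_pseudoHypDist_le {s : ℝ} (ha : ‖a‖ < 1) (hb : ‖b‖ < 1)
    (h : pseudoHypDist a b ≤ s) : ‖b‖ * (1 + s * ‖a‖) ≤ ‖a‖ + s := by
  have hab : 0 < 1 - ‖a‖ * ‖b‖ := by nlinarith [norm_nonneg a, norm_nonneg b]
  have := (norm_sub_norm_div_le_pseudoHypDist ha hb).trans h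
  rw [div_le_iff₀ hab] at this
  linarith

theorem norm_mul_le_of_pseudoHypDist_le_of_norm_le {s t : ℝ} (ha : ‖a‖ < 1) (hat : ‖a‖ ≤ t)
    (hb : ‖b‖ < 1) (h : pseudoHypDist a b ≤ s) (hs : s ≤ 1) : ‖b‖ * (1 + s * t) ≤ t + s := by
  have hs0 : 0 ≤ s := (pseudoHypDist_nonneg a b).trans h
  nlinarith [norm_mul_le_of_pseudoHypDist_le ha hb h,
    mul_nonneg (sub_nonneg.2 hat) (by nlinarith [norm_nonneg b] : 0 ≤ 1 - s * ‖b‖)]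

theorem pseudoHypDist_map_le {F : ℂ → ℂ} (hd : DifferentiableOn ℂ F (ball 0 1))
    (hm : MapsTo F (ball 0 1) (ball 0 1)) (ha : ‖a‖ < 1) (hb : ‖b‖ < 1) :
    pseudoHypDist (F a) (F b) ≤ pseudoHypDist a b := by
  have hFa : ‖F a‖ < 1 := mem_ball_zero_iff.1 (hm (mem_ball_zero_iff.2 ha))
  have hma := mapsTo_discMobius (a := -a) (by simpa using ha)
  -- `H` is a self-map of the disc fixing `0`, so Schwarz's lemma applies to it.
  set H : ℂ → ℂ := discMobius (F a) ∘ F ∘ discMobius (-a)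
  have hdH : DifferentiableOn ℂ H (ball 0 1) :=
    (differentiableOn_discMobius hFa).comp (hd.comp (differentiableOn_discMobius
      (by simpa using ha)) hma) (hm.comp hma)
  have hmH : MapsTo H (ball 0 1) (closedBall 0 1) :=
    ((mapsTo_discMobius hFa).comp (hm.comp hma)).mono_right ball_subset_closedBall
  have hH0 : H 0 = 0 := by simp [H, discMobius]
  have hHab : H (discMobius a b) = discMobius (F a) (F b) := by
    simp only [H, Function.comp_apply, discMobius_neg_discMobius ha hb]
  simpa only [pseudoHypDist, hHab] using Complex.norm_le_norm_of_mapsTo_ball hdH hmH hH0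
    (norm_discMobius_lt_one ha hb)

theorem pseudoHypDist_div_div_le {t δ : ℝ} {p y : ℂ} (ht : 0 < t) (hδ : 0 < δ) (hp : t + δ ≤ ‖p‖)
    (hp1 : ‖p‖ < 1) (hy : t ≤ ‖y‖) (hy1 : ‖y‖ < 1) :
    pseudoHypDist (t / p) (t / y) ≤ 2 * pseudoHypDist p y / δ := by
  have hp0 : p ≠ 0 := norm_pos_iff.1 (by linarith)
  have hy0 : y ≠ 0 := norm_pos_iff.1 (by linarith)
  have hd := norm_pos_iff.2 (one_sub_conj_mul_ne_zero_s14 hp1 hy1.le)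
  have hden : δ * t ≤ ‖conj p * y - (t : ℂ) ^ 2‖ := by
    have : ‖conj p * y‖ - ‖(t : ℂ) ^ 2‖ ≤ ‖conj p * y - (t : ℂ) ^ 2‖ := norm_sub_norm_le _ _
    rw [norm_mul, Complex.norm_conj, norm_pow, Complex.norm_of_nonneg ht.le] at this
    nlinarith [mul_le_mul hp hy ht.le (norm_nonneg p)]
  have hnum : ‖p - y‖ ≤ 2 * pseudoHypDist p y := by
    have : ‖1 - conj p * y‖ ≤ 2 := by
      refine (norm_sub_le _ _).trans ?_
      rw [norm_one, norm_mul, Complex.norm_conj]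
      nlinarith [norm_nonneg p, norm_nonneg y]
    have e : ‖p - y‖ = pseudoHypDist p y * ‖1 - conj p * y‖ := by
      rw [pseudoHypDist_eq_div, div_mul_cancel₀ _ hd.ne', norm_sub_rev]
    rw [e, mul_comm 2]
    exact mul_le_mul_of_nonneg_left this (pseudoHypDist_nonneg p y)
  have hden0 : 0 < ‖conj p * y - (t : ℂ) ^ 2‖ := (mul_pos hδ ht).trans_le hden
  have hformula : pseudoHypDist (t / p) (t / y) = t * ‖p - y‖ / ‖conj p * y - (t : ℂ) ^ 2‖ := by
    have e1 : (t : ℂ) / y - t / p = t * (p - y) / (p * y) := by field_simp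
    have e2 : 1 - conj ((t : ℂ) / p) * (t / y) = (conj p * y - (t : ℂ) ^ 2) / (conj p * y) := by
      have hpc : conj p ≠ 0 := (map_ne_zero _).2 hp0
      rw [map_div₀, Complex.conj_ofReal]
      field_simp
    rw [pseudoHypDist_eq_div, e1, e2]
    simp only [norm_div, norm_mul, Complex.norm_conj, Complex.norm_of_nonneg ht.le]
    field_simp
  rw [hformula, div_le_div_iff₀ hden0 hδ]
  nlinarith [mul_le_mul_of_nonneg_left hnum ht.le, mul_le_mul_of_nonneg_left hden
    (mul_nonneg zero_le_two (pseudoHypDist_nonneg p y))]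

theorem add_le_div_norm_of_pseudoHypDist_le {u v t σ : ℝ} (hu : 0 < u) (hut : u ≤ t)
    (htv : t ≤ v) (hv : v < 1) (hσ : σ ≤ 1 / 2) (ha : ‖a‖ ≤ t) (hb : 0 < ‖b‖) (hb1 : ‖b‖ < 1)
    (hab : pseudoHypDist a b ≤ σ) : t + u * (1 - v) / 4 ≤ t / ‖b‖ := by
  have hσ0 : 0 ≤ σ := (pseudoHypDist_nonneg a b).trans hab
  have key := norm_mul_le_of_pseudoHypDist_le_of_norm_le (ha.trans_lt (by linarith)) ha hb1 hab
    (by linarith)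
  have hc : 0 ≤ u * (1 - v) / 4 := by nlinarith
  have h1 : u * (1 - v) ≤ t * (1 - t) := by nlinarith
  have h2 : (t + u * (1 - v) / 4) * (t + σ) ≤ t * (1 + σ * t) := by
    nlinarith [mul_le_mul_of_nonneg_right h1 (by linarith : (0 : ℝ) ≤ 1 - σ),
      mul_nonneg hc (by linarith : (0 : ℝ) ≤ 3 / 2 - t - σ)]
  rw [le_div_iff₀ hb]
  refine le_of_mul_le_mul_right (a := 1 + σ * t) ?_ (by nlinarith)
  nlinarith [mul_le_mul_of_nonneg_left key (by linarith : (0 : ℝ) ≤ t + u * (1 - v) / 4)]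

end Mobius

structure IsDiscAutomorphism (f g : ℂ → ℂ) : Prop where
  differentiableOn : DifferentiableOn ℂ f (ball 0 1)
  differentiableOn_inv : DifferentiableOn ℂ g (ball 0 1)
  mapsTo : MapsTo f (ball 0 1) (ball 0 1)
  mapsTo_inv : MapsTo g (ball 0 1) (ball 0 1)
  invOn : InvOn g f (ball 0 1) (ball 0 1)

namespace IsDiscAutomorphism

variable {f g : ℂ → ℂ} {a b x : ℂ} {r r' s t v w : ℝ}

theorem of_bijOn (hf : DifferentiableOn ℂ f (ball 0 1)) (hbij : BijOn f (ball 0 1) (ball 0 1))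
    (hg : DifferentiableOn ℂ g (ball 0 1)) (hgf : ∀ z ∈ ball (0 : ℂ) 1, g (f z) = z) :
    IsDiscAutomorphism f g :=
  ⟨hf, hg, hbij.mapsTo, LeftInvOn.mapsTo hgf hbij.surjOn,
    ⟨hgf, hbij.surjOn.leftInvOn_of_rightInvOn hgf⟩⟩

theorem pseudoHypDist_map (h : IsDiscAutomorphism f g) (ha : ‖a‖ < 1) (hb : ‖b‖ < 1) :
    pseudoHypDist (f a) (f b) = pseudoHypDist a b := by
  have hfa := mem_ball_zero_iff.1 (h.mapsTo (mem_ball_zero_iff.2 ha))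
  have hfb := mem_ball_zero_iff.1 (h.mapsTo (mem_ball_zero_iff.2 hb))
  refine (pseudoHypDist_map_le h.differentiableOn h.mapsTo ha hb).antisymm ?_
  calc pseudoHypDist a b = pseudoHypDist (g (f a)) (g (f b)) := by
        rw [h.invOn.1 (mem_ball_zero_iff.2 ha), h.invOn.1 (mem_ball_zero_iff.2 hb)]
    _ ≤ pseudoHypDist (f a) (f b) :=
        pseudoHypDist_map_le h.differentiableOn_inv h.mapsTo_inv hfa hfb

theorem lt_norm_of_notMem_image (h : IsDiscAutomorphism f g) (hx : x ∈ ball (0 : ℂ) 1)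
    (hx' : x ∉ f '' closedBall 0 t) : t < ‖g x‖ :=
  lt_of_not_ge fun hle => hx' ⟨g x, mem_closedBall_zero_iff.2 hle, h.invOn.2 hx⟩

theorem notMem_image_closedBall (h : IsDiscAutomorphism f g) (hb : ‖b‖ < 1) (hbt : t < ‖b‖) :
    f b ∉ f '' closedBall 0 t := by
  rintro ⟨a, ha, hab⟩
  have ha' := mem_closedBall_zero_iff.1 ha
  have := h.invOn.1.injOn (mem_ball_zero_iff.2 (by linarith)) (mem_ball_zero_iff.2 hb) hab
  subst this
  linarith

theorem mem_image_closedBall_of_pseudoHypDist_le (h : IsDiscAutomorphism f g) (hv : v < 1)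
    (hs : s * (1 - v * w) = w - v) (hs1 : s ≤ 1) (ha : ‖a‖ ≤ v) (hx : x ∈ ball (0 : ℂ) 1)
    (hax : pseudoHypDist (f a) x ≤ s) : x ∈ f '' closedBall 0 w := by
  have ha1 : ‖a‖ < 1 := ha.trans_lt hv
  have hgx := mem_ball_zero_iff.1 (h.mapsTo_inv hx)
  refine ⟨g x, mem_closedBall_zero_iff.2 ?_, h.invOn.2 hx⟩
  have hagx : pseudoHypDist a (g x) ≤ s := by
    rwa [← h.pseudoHypDist_map ha1 hgx, h.invOn.2 hx]
  have hs0 : 0 ≤ s := (pseudoHypDist_nonneg _ _).trans hax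
  have hv0 : 0 ≤ v := (norm_nonneg a).trans ha
  -- `w` is the Möbius sum of `v` and `s`: `v + s = w * (1 + s * v)`.
  refine le_of_mul_le_mul_right (a := 1 + s * v) ?_ (by positivity)
  linarith [norm_mul_le_of_pseudoHypDist_le_of_norm_le ha1 ha hgx hagx hs1]

theorem lt_pseudoHypDist_of_disjoint (h : IsDiscAutomorphism f g) {f' : ℂ → ℂ}
    (hf' : MapsTo f' (ball 0 1) (ball 0 1))
    (hdisj : Disjoint (f '' closedBall 0 w) (f' '' closedBall 0 w)) (hv : v < 1) (hw : w < 1)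
    (hs : s * (1 - v * w) = w - v) (hs1 : s ≤ 1) (hr : r ≤ v) (hr' : r' ≤ w)
    (ha : a ∈ f '' closedBall 0 r) (hb : b ∈ f' '' closedBall 0 r') : s < pseudoHypDist a b := by
  obtain ⟨a, ha, rfl⟩ := ha
  have hb' : b ∈ f' '' closedBall 0 w := image_mono (closedBall_subset_closedBall hr') hb
  have hb1 : b ∈ ball (0 : ℂ) 1 :=
    image_subset_iff.2 (hf'.mono_left (closedBall_subset_ball hw)) hb'
  exact lt_of_not_ge fun hle => hdisj.ne_of_mem
    (h.mem_image_closedBall_of_pseudoHypDist_le hv hs hs1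
      ((mem_closedBall_zero_iff.1 ha).trans hr) hb1 hle) hb' rfl

end IsDiscAutomorphism

theorem isDiscAutomorphism_discMobius {a : ℂ} (ha : ‖a‖ < 1) :
    IsDiscAutomorphism (discMobius a) (discMobius (-a)) := by
  have ha' : ‖-a‖ < 1 := by rwa [norm_neg]
  refine ⟨differentiableOn_discMobius ha, differentiableOn_discMobius ha',
    mapsTo_discMobius ha, mapsTo_discMobius ha', fun z hz => ?_, fun z hz => ?_⟩
  · exact discMobius_neg_discMobius ha (mem_ball_zero_iff.1 hz)
  · simpa using discMobius_neg_discMobius ha' (mem_ball_zero_iff.1 hz)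

theorem pseudoHypDist_le_add {a b z : ℂ} (ha : ‖a‖ < 1) (hb : ‖b‖ < 1) (hz : ‖z‖ < 1) :
    pseudoHypDist a b ≤ pseudoHypDist a z + pseudoHypDist z b := by
  have hza := norm_discMobius_lt_one hz ha
  have hzb := norm_discMobius_lt_one hz hb
  calc pseudoHypDist a b = pseudoHypDist (discMobius z a) (discMobius z b) :=
        ((isDiscAutomorphism_discMobius hz).pseudoHypDist_map ha hb).symm
    _ ≤ (‖discMobius z a‖ + ‖discMobius z b‖) / (1 + ‖discMobius z a‖ * ‖discMobius z b‖) :=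
        pseudoHypDist_le_norm_add_norm_div hza hzb
    _ ≤ ‖discMobius z a‖ + ‖discMobius z b‖ :=
        div_le_self (by positivity) (le_add_of_nonneg_right (by positivity))
    _ = pseudoHypDist a z + pseudoHypDist z b := by rw [pseudoHypDist_comm a z]; rfl

structure IsSqueezingMap (D : Set ℂ) (p : ℂ) (F : ℂ → ℂ) (r : ℝ) : Prop where
  differentiableOn : DifferentiableOn ℂ F D
  injOn : InjOn F D
  image_subset : F '' D ⊆ ball 0 1
  map_eq_zero : F p = 0
  pos : 0 < r
  ball_subset : ball 0 r ⊆ F '' D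

namespace IsSqueezingMap

variable {D : Set ℂ} {p : ℂ} {F : ℂ → ℂ} {r : ℝ}

theorem le_squeezingFn (h : IsSqueezingMap D p F r) : r ≤ squeezingFn D p := by
  refine le_csSup ⟨1, ?_⟩ ⟨F, h.1, h.2, h.3, h.4, h.5, h.6⟩
  rintro x ⟨G, -, -, hG, -, -, hx⟩
  refine le_of_not_gt fun h1 => ?_
  have := hG (hx (mem_ball_zero_iff.2 (by simpa using h1) : (1 : ℂ) ∈ ball 0 x))
  simp at this

theorem comp {φ : ℂ → ℂ} (h : IsSqueezingMap (φ '' D) (φ p) F r) (hφ : DifferentiableOn ℂ φ D)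
    (hinj : InjOn φ D) : IsSqueezingMap D p (F ∘ φ) r where
  differentiableOn := h.differentiableOn.comp hφ (mapsTo_image φ D)
  injOn := h.injOn.comp hinj (mapsTo_image φ D)
  image_subset := by rw [image_comp]; exact h.image_subset
  map_eq_zero := h.map_eq_zero
  pos := h.pos
  ball_subset := by rw [image_comp]; exact h.ball_subset

end IsSqueezingMap

theorem isSqueezingMap_discMobius {D : Set ℂ} {p : ℂ} {c : ℝ} (hD : D ⊆ ball 0 1) (hp : p ∈ D)
    (hc : 0 < c) (hc1 : c ≤ 1) (hball : ∀ x ∈ ball (0 : ℂ) 1, pseudoHypDist p x < c → x ∈ D) :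
    IsSqueezingMap D p (discMobius p) c := by
  have hauto := isDiscAutomorphism_discMobius (mem_ball_zero_iff.1 (hD hp))
  refine ⟨hauto.differentiableOn.mono hD, hauto.invOn.1.injOn.mono hD,
    (image_mono hD).trans hauto.mapsTo.image_subset, discMobius_self p, hc, fun y hy => ?_⟩
  have hy1 : y ∈ ball (0 : ℂ) 1 := ball_subset_ball hc1 hy
  refine ⟨discMobius (-p) y, hball _ (hauto.mapsTo_inv hy1) ?_, hauto.invOn.2 hy1⟩
  rw [pseudoHypDist, hauto.invOn.2 hy1]
  exact mem_ball_zero_iff.1 hy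

namespace IsDiscAutomorphism

variable {f g : ℂ → ℂ} {a y z : ℂ} {D : Set ℂ} {t u v δ σ : ℝ}

theorem mem_image_div_of_pseudoHypDist_lt (h : IsDiscAutomorphism f g) (ht : 0 < t) (hδ : 0 < δ)
    (hσ : σ ≤ 1) (hz : z ∈ ball (0 : ℂ) 1) (hq : t + δ ≤ ‖(t : ℂ) / g z‖)
    (hq1 : ‖(t : ℂ) / g z‖ < 1)
    (hnear : ∀ x ∈ ball (0 : ℂ) 1 \ f '' closedBall 0 t, pseudoHypDist z x < σ → x ∈ D)
    (hy : y ∈ ball (0 : ℂ) 1) (hqy : pseudoHypDist ((t : ℂ) / g z) y < δ * σ / 2) :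
    y ∈ (fun ζ => (t : ℂ) / g ζ) '' D := by
  set q : ℂ := t / g z
  have ht0 : (t : ℂ) ≠ 0 := Complex.ofReal_ne_zero.2 ht.ne'
  have hy1 := mem_ball_zero_iff.1 hy
  have hyt : t < ‖y‖ := by
    have := norm_mul_le_of_pseudoHypDist_le hy1 hq1 ((pseudoHypDist_comm y q).trans_lt hqy).le
    have hρ : 0 ≤ δ * σ / 2 := (pseudoHypDist_nonneg q y).trans hqy.le
    nlinarith [mul_nonneg hρ (mul_nonneg (norm_nonneg q) (norm_nonneg y)),
      mul_le_mul_of_nonneg_left hσ hδ.le]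
  have hy0 : 0 < ‖y‖ := ht.trans hyt
  have hx1 : ‖(t : ℂ) / y‖ < 1 := by
    rw [norm_div, Complex.norm_of_nonneg ht.le, div_lt_one hy0]; exact hyt
  have hxt : t < ‖(t : ℂ) / y‖ := by
    rw [norm_div, Complex.norm_of_nonneg ht.le, lt_div_iff₀ hy0]; nlinarith
  have hgz : g z = t / q := (div_div_cancel₀ ht0).symm
  refine ⟨f (t / y), hnear _ ⟨h.mapsTo (mem_ball_zero_iff.2 hx1),
    h.notMem_image_closedBall hx1 hxt⟩ ?_, ?_⟩
  · calc pseudoHypDist z (f (t / y)) = pseudoHypDist (t / q) (t / y) := by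
          rw [← hgz, ← h.pseudoHypDist_map (mem_ball_zero_iff.1 (h.mapsTo_inv hz)) hx1,
            h.invOn.2 hz]
      _ ≤ 2 * pseudoHypDist q y / δ := pseudoHypDist_div_div_le ht hδ hq hq1 hyt.le hy1
      _ < σ := by rw [div_lt_iff₀ hδ]; linarith
  · simp only [h.invOn.1 (mem_ball_zero_iff.2 hx1), div_div_cancel₀ ht0]

theorem le_squeezingFn_of_pseudoHypDist_lt (h : IsDiscAutomorphism f g) (hu : 0 < u) (hut : u ≤ t)
    (htv : t ≤ v) (hv : v < 1) (hσ : 0 < σ) (hσ1 : σ ≤ 1 / 2) (hD : D ⊆ ball 0 1)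
    (hhole : Disjoint D (f '' closedBall 0 t)) (hz : z ∈ D)
    (hnear : ∀ x ∈ ball (0 : ℂ) 1 \ f '' closedBall 0 t, pseudoHypDist z x < σ → x ∈ D)
    (ha : a ∈ f '' closedBall 0 t) (haz : pseudoHypDist a z < σ) :
    u * (1 - v) * σ / 8 ≤ squeezingFn D z := by
  have ht : 0 < t := hu.trans_le hut
  have ht0 : (t : ℂ) ≠ 0 := Complex.ofReal_ne_zero.2 ht.ne'
  have hgD : ∀ ζ ∈ D, t < ‖g ζ‖ ∧ ‖g ζ‖ < 1 := fun ζ hζ =>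
    ⟨h.lt_norm_of_notMem_image (hD hζ) (hhole.notMem_of_mem_left hζ),
      mem_ball_zero_iff.1 (h.mapsTo_inv (hD hζ))⟩
  have hgD0 : ∀ ζ ∈ D, g ζ ≠ 0 := fun ζ hζ => norm_pos_iff.1 (ht.trans (hgD ζ hζ).1)
  have hιD : ∀ ζ ∈ D, ‖(t : ℂ) / g ζ‖ < 1 := fun ζ hζ => by
    rw [norm_div, Complex.norm_of_nonneg ht.le, div_lt_one (ht.trans (hgD ζ hζ).1)]
    exact (hgD ζ hζ).1
  obtain ⟨a, ha, rfl⟩ := ha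
  have ha1 : ‖a‖ < 1 := (mem_closedBall_zero_iff.1 ha).trans_lt (htv.trans_lt hv)
  have hq : t + u * (1 - v) / 4 ≤ ‖(t : ℂ) / g z‖ := by
    rw [norm_div, Complex.norm_of_nonneg ht.le]
    refine add_le_div_norm_of_pseudoHypDist_le hu hut htv hv hσ1 (mem_closedBall_zero_iff.1 ha)
      (ht.trans (hgD z hz).1) (hgD z hz).2 ?_
    rw [← h.pseudoHypDist_map ha1 (hgD z hz).2, h.invOn.2 (hD hz)]
    exact haz.le
  have hδ : 0 < u * (1 - v) / 4 := by nlinarith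
  have hsq : IsSqueezingMap ((fun ζ => (t : ℂ) / g ζ) '' D) (t / g z) (discMobius (t / g z))
      (u * (1 - v) * σ / 8) := by
    refine isSqueezingMap_discMobius (image_subset_iff.2 fun ζ hζ => mem_ball_zero_iff.2
      (hιD ζ hζ)) (mem_image_of_mem _ hz) (by positivity) (by nlinarith) fun y hy hqy => ?_
    exact h.mem_image_div_of_pseudoHypDist_lt ht hδ (by linarith) (hD hz) hq (hιD z hz) hnear hy
      (by linarith)
  refine (hsq.comp (fun ζ hζ => ?_) fun ζ₁ h₁ ζ₂ h₂ heq => ?_).le_squeezingFn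
  · exact (differentiableWithinAt_const _).div ((h.differentiableOn_inv.mono hD) ζ hζ)
      (hgD0 ζ hζ)
  · refine h.invOn.2.injOn (hD h₁) (hD h₂) ?_
    rw [← div_div_cancel₀ (b := g ζ₁) ht0, heq, div_div_cancel₀ ht0]

end IsDiscAutomorphism

theorem le_squeezingFn_sdiff_iUnion {ι : Type*} {f g : ι → ℂ → ℂ} {r : ι → ℝ} {u v s : ℝ} {z : ℂ}
    (haut : ∀ k, IsDiscAutomorphism (f k) (g k)) (hu : 0 < u) (huv : u ≤ v)
    (hr : ∀ k, u ≤ r k ∧ r k ≤ v) (hv : v < 1) (hs : 0 < s) (hs1 : s ≤ 1)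
    (hsep : ∀ j k, j ≠ k → ∀ a ∈ f j '' closedBall 0 (r j), ∀ b ∈ f k '' closedBall 0 (r k),
      s < pseudoHypDist a b)
    (hz : z ∈ ball (0 : ℂ) 1 \ ⋃ k, f k '' closedBall 0 (r k)) :
    u * (1 - v) * (s / 2) / 8 ≤
      squeezingFn (ball (0 : ℂ) 1 \ ⋃ k, f k '' closedBall 0 (r k)) z := by
  have hc : 0 < u * (1 - v) * (s / 2) / 8 ∧ u * (1 - v) * (s / 2) / 8 ≤ s / 2 := by
    have : 0 < u * (1 - v) := mul_pos hu (by linarith)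
    have : u * (1 - v) ≤ 1 := by nlinarith
    constructor <;> nlinarith
  by_cases hnear : ∃ j, ∃ a ∈ f j '' closedBall 0 (r j), pseudoHypDist a z < s / 2
  · obtain ⟨j, a, ha, haz⟩ := hnear
    have ha1 : ‖a‖ < 1 := mem_ball_zero_iff.1 (image_subset_iff.2
      ((haut j).mapsTo.mono_left (closedBall_subset_ball (by linarith [hr j]))) ha)
    refine (haut j).le_squeezingFn_of_pseudoHypDist_lt hu (hr j).1 (hr j).2 hv (by positivity)
      (by linarith) sdiff_subset
      (disjoint_sdiff_left.mono_right (subset_iUnion (fun k => f k '' closedBall 0 (r k)) j))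
      hz (fun x ⟨hx, hxj⟩ hzx => ⟨hx, ?_⟩) ha haz
    simp only [mem_iUnion, not_exists]
    intro k hk
    rcases eq_or_ne j k with rfl | hjk
    · exact hxj hk
    · refine (hsep j k hjk a ha x hk).not_ge ((pseudoHypDist_le_add ha1 (mem_ball_zero_iff.1 hx)
        (mem_ball_zero_iff.1 hz.1)).trans ?_)
      linarith
  · push Not at hnear
    refine (isSqueezingMap_discMobius sdiff_subset hz hc.1 (by linarith)
      fun x hx hzx => ⟨hx, ?_⟩).le_squeezingFn
    simp only [mem_iUnion, not_exists]
    intro k hk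
    linarith [hnear k x hk, pseudoHypDist_comm x z]

/-- Let `0 < u < v < w < 1`, let `r k ∈ (u, v)`, and let `f k` be
holomorphic automorphisms of the unit disc `Δ` such that the images `f k '' cl Δ_w` are
pairwise disjoint. Then the domain `D = Δ \ ⋃ k, f k '' cl Δ_{r k}` has a squeezing
function with a positive lower bound (it is holomorphic homogeneous regular). -/
theorem stmt_14 (u v w : ℝ) (h0u : 0 < u) (huv : u < v) (hvw : v < w) (hw1 : w < 1)
    (r : ℕ → ℝ) (hr : ∀ k, u < r k ∧ r k < v)
    (f : ℕ → ℂ → ℂ)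
    (hhol : ∀ k, DifferentiableOn ℂ (f k) (ball (0 : ℂ) 1))
    (hbij : ∀ k, Set.BijOn (f k) (ball (0 : ℂ) 1) (ball (0 : ℂ) 1))
    (hinv : ∀ k, ∃ g : ℂ → ℂ, DifferentiableOn ℂ g (ball (0 : ℂ) 1) ∧
      ∀ z ∈ ball (0 : ℂ) 1, g (f k z) = z)
    (hdisj : ∀ j k, j ≠ k →
      Disjoint (f j '' closedBall (0 : ℂ) w) (f k '' closedBall (0 : ℂ) w)) :
    ∃ c > 0, ∀ z ∈ ball (0 : ℂ) 1 \ ⋃ k, f k '' closedBall (0 : ℂ) (r k),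
      c ≤ squeezingFn (ball (0 : ℂ) 1 \ ⋃ k, f k '' closedBall (0 : ℂ) (r k)) z := by
  have hv1 : v < 1 := hvw.trans hw1
  have hvw1 : 0 < 1 - v * w := by nlinarith
  have hs1 : (w - v) / (1 - v * w) ≤ 1 := by rw [div_le_one hvw1]; nlinarith
  choose g hg hgf using hinv
  have haut k : IsDiscAutomorphism (f k) (g k) := .of_bijOn (hhol k) (hbij k) (hg k) (hgf k)
  refine ⟨_, ?_, fun z hz => le_squeezingFn_sdiff_iUnion haut h0u huv.le (fun k => ⟨(hr k).1.le,
    (hr k).2.le⟩) hv1 (div_pos (by linarith) hvw1) hs1 (fun j k hjk a ha b hb => ?_) hz⟩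
  · have : 0 < u * (1 - v) := mul_pos h0u (by linarith)
    have : 0 < w - v := by linarith
    positivity
  · exact (haut j).lt_pseudoHypDist_of_disjoint (haut k).mapsTo (hdisj j k hjk) hv1 hw1
      (div_mul_cancel₀ _ hvw1.ne') hs1 (hr j).2.le ((hr k).2.trans hvw).le ha hb
end
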